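/- Let $\mathcal{C}$ be an abelian category with enough injectives and $X$ an exact, locally nilpotent endofunctor preserving injectives. If in the construction of $\operatorname{Mo}\mathsf{M}$ the chosen monomorphism $j\colon \ker h_{\mathsf{M}} \to J$ is an injective envelope, then the resulting map $p_{\mathsf{M}}\colon \operatorname{Mimo}\mathsf{M} \to \mathsf{M}$ is a minimal right $\operatorname{Mono}(X)$-approximation, i.e. a right approximation that is right minimal (any endomorphism $\varphi$ of $\operatorname{Mimo}\mathsf{M}$ with $p_{\mathsf{M}} \circ \varphi = p_{\mathsf{M}}$ is an isomorphism). -/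

import Mathlib

/-!
The pushout `Mimo M` can be computed concretely: its carrier is `f₁J ⊕ M`, with the triangular
structure map `(h_{f₁J}, e; 0, h_M)`. This structure map is mono because `e` is mono on `ker h_M`
and `h_{f₁J}` is split mono. A map `f : N → M` with `N ∈ Mono(X)` lifts as soon as one solves
`h_N ≫ g = X(f) ≫ e ≫ η_J + X(g) ≫ h_{f₁J}` for `g : N → f₁J`, with `η_J : J → f₁J` the unit;
the solution is built layer by layer in the injectives `X^k J` by extending along the mono `h_N`,
and the process stops because `X` is locally nilpotent. An endomorphism of `Mimo M` over `M` is triangular, its corner being a module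
endomorphism `a` of `f₁J`. Read modulo the image of `X`, `a` is an endomorphism of `J` fixing the
envelope `ker h_M → J`, hence invertible; and an endomorphism of a free module that is invertible
modulo `X` is invertible, because one that vanishes modulo `X` has its `k`-th power factoring
through `X^k`, so it is nilpotent.
-/

open CategoryTheory Limits

universe v u

variable {C : Type u} [Category.{v} C]

/-- The power `X^n` of an endofunctor, with `X^(n+1) = X^n ⋙ X`. -/
def fpow (X : C ⥤ C) : ℕ → (C ⥤ C)
  | 0 => 𝟭 C
  | n + 1 => fpow X n ⋙ X

/-- `X` is locally nilpotent if every object is annihilated by some power of `X`. -/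
def LocallyNilpotent (X : C ⥤ C) : Prop :=
  ∀ M : C, ∃ n : ℕ, IsZero ((fpow X n).obj M)

/-- The category `(X ⇓ Id)` of `X`-modules, identified with the Eilenberg–Moore category
of the free monad on `X`. -/
structure XMod (X : C ⥤ C) : Type max u v where
  carrier : C
  str : X.obj carrier ⟶ carrier

/-- Morphisms of `X`-modules. -/
@[ext]
structure XModHom {X : C ⥤ C} (M N : XMod X) : Type v where
  hom : M.carrier ⟶ N.carrier
  comm : M.str ≫ hom = X.map hom ≫ N.str

instance (X : C ⥤ C) : Category (XMod X) where
  Hom := XModHom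
  id M := ⟨𝟙 M.carrier, by simp⟩
  comp f g := ⟨f.hom ≫ g.hom, by
    rw [← Category.assoc, f.comm, Category.assoc, g.comm, ← Category.assoc, ← Functor.map_comp]⟩
  id_comp f := by apply XModHom.ext; simp [CategoryStruct.id, CategoryStruct.comp]
  comp_id f := by apply XModHom.ext; simp [CategoryStruct.id, CategoryStruct.comp]
  assoc f g h := by apply XModHom.ext; simp [CategoryStruct.comp]

@[simp] lemma XMod.id_hom {X : C ⥤ C} (M : XMod X) : (𝟙 M : XModHom M M).hom = 𝟙 M.carrier := rfl
@[simp] lemma XMod.comp_hom {X : C ⥤ C} {M N P : XMod X} (f : M ⟶ N) (g : N ⟶ P) :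
    (f ≫ g).hom = f.hom ≫ g.hom := rfl

/-- `F` is the free `X`-module `f₁(N)` on `N`, encoded via the universal
property of the free–forgetful adjunction `f₁ ⊣ f⋆`. -/
structure IsFreeXModOn (X : C ⥤ C) (F : XMod X) (N : C) where
  unit : N ⟶ F.carrier
  lift : ∀ (P : XMod X), (N ⟶ P.carrier) → (F ⟶ P)
  fac : ∀ (P : XMod X) (g : N ⟶ P.carrier), unit ≫ (lift P g).hom = g
  uniq : ∀ (P : XMod X) (g : N ⟶ P.carrier) (k : F ⟶ P), unit ≫ k.hom = g → k = lift P g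

variable [Abelian C] {X : C ⥤ C} [X.Additive]

instance {M N : XMod X} : Zero (XModHom M N) := ⟨⟨0, by simp⟩⟩
instance {M N : XMod X} : Add (XModHom M N) :=
  ⟨fun f g => ⟨f.hom + g.hom, by
    simp [Preadditive.comp_add, Preadditive.add_comp, f.comm, g.comm]⟩⟩
instance {M N : XMod X} : Neg (XModHom M N) :=
  ⟨fun f => ⟨-f.hom, by simp [Preadditive.comp_neg, Preadditive.neg_comp, f.comm]⟩⟩

instance {M N : XMod X} : AddCommGroup (XModHom M N) where
  add_assoc f g h := by apply XModHom.ext; exact add_assoc _ _ _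
  zero_add f := by apply XModHom.ext; exact zero_add _
  add_zero f := by apply XModHom.ext; exact add_zero _
  add_comm f g := by apply XModHom.ext; exact add_comm _ _
  neg_add_cancel f := by apply XModHom.ext; exact neg_add_cancel _
  nsmul := nsmulRec
  zsmul := zsmulRec

instance : Preadditive (XMod X) where
  homGroup M N := inferInstanceAs (AddCommGroup (XModHom M N))
  add_comp M N P f g h := by apply XModHom.ext; exact Preadditive.add_comp _ _ _ _ _ _
  comp_add M N P f g h := by apply XModHom.ext; exact Preadditive.comp_add _ _ _ _ _ _

@[simp] lemma XMod.zero_hom (M N : XMod X) : (0 : M ⟶ N).hom = 0 := rfl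
@[simp] lemma XMod.add_hom {M N : XMod X} (f g : M ⟶ N) : (f + g).hom = f.hom + g.hom := rfl


section

variable {D : Type*} [Category D]

def IsRightMinimal {A B : D} (p : A ⟶ B) : Prop :=
  ∀ φ : A ⟶ A, φ ≫ p = p → IsIso φ

theorem IsRightMinimal.of_iso {A A' B : D} {p : A ⟶ B} {p' : A' ⟶ B} (i : A ≅ A')
    (hi : i.hom ≫ p' = p) (hp' : IsRightMinimal p') : IsRightMinimal p := by
  subst hi
  intro φ hφ
  have : IsIso (i.inv ≫ φ ≫ i.hom) := hp' _ (by simp [hφ])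
  have hφ_eq : φ = i.hom ≫ (i.inv ≫ φ ≫ i.hom) ≫ i.inv := by simp
  rw [hφ_eq]
  infer_instance

variable {Y : D ⥤ D}

theorem injective_fpow (hYinj : ∀ I : D, Injective I → Injective (Y.obj I)) {J : D}
    (hJ : Injective J) : ∀ n : ℕ, Injective ((fpow Y n).obj J)
  | 0 => hJ
  | n + 1 => hYinj _ (injective_fpow hYinj hJ n)

namespace XMod

@[ext]
theorem hom_ext {A B : XMod Y} {f g : A ⟶ B} (h : f.hom = g.hom) : f = g :=
  XModHom.ext h

variable (Y) in
def forget : XMod Y ⥤ D where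
  obj A := A.carrier
  map f := f.hom

@[simp]
theorem forget_map {A B : XMod Y} (f : A ⟶ B) : (forget Y).map f = f.hom := rfl

instance : (forget Y).ReflectsIsomorphisms where
  reflects {A B} f (_ : IsIso f.hom) := by
    have hinv : B.str ≫ inv f.hom = Y.map (inv f.hom) ≫ A.str := by
      rw [← cancel_epi (Y.map f.hom), ← reassoc_of% f.comm, ← Functor.map_comp_assoc]
      simp
    exact ⟨⟨inv f.hom, hinv⟩, by ext; simp, by ext; simp⟩

theorem mono_str_of_iso {A B : XMod Y} (i : A ≅ B) [Mono B.str] : Mono A.str := by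
  have hstr : A.str = Y.map i.hom.hom ≫ B.str ≫ i.inv.hom := by
    rw [← reassoc_of% i.hom.comm, ← comp_hom, i.hom_inv_id, id_hom, Category.comp_id]
  have : IsIso i.hom.hom := inferInstanceAs (IsIso ((forget Y).map i.hom))
  have : IsIso i.inv.hom := inferInstanceAs (IsIso ((forget Y).map i.inv))
  rw [hstr]
  infer_instance

end XMod

def IsRightMonoApproximation {A M : XMod Y} (p : A ⟶ M) : Prop :=
  Mono A.str ∧ ∀ N : XMod Y, Mono N.str → ∀ f : N ⟶ M, ∃ f' : N ⟶ A, f' ≫ p = f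

theorem IsRightMonoApproximation.of_iso {A A' M : XMod Y} {p : A ⟶ M} {p' : A' ⟶ M}
    (i : A ≅ A') (hi : i.hom ≫ p' = p) (hp' : IsRightMonoApproximation p') :
    IsRightMonoApproximation p := by
  have := hp'.1
  refine ⟨XMod.mono_str_of_iso i, fun N hN f => ?_⟩
  obtain ⟨f', hf'⟩ := hp'.2 N hN f
  exact ⟨f' ≫ i.inv, by simp [← hi, hf']⟩

namespace IsFreeXModOn

variable {F : XMod Y} {N : D} (hF : IsFreeXModOn Y F N)

theorem hom_ext {P : XMod Y} {k l : F ⟶ P} (h : hF.unit ≫ k.hom = hF.unit ≫ l.hom) : k = l :=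
  (hF.uniq P _ k rfl).trans (hF.uniq P _ l h.symm).symm

end IsFreeXModOn

variable [Preadditive D]

theorem CategoryTheory.Functor.map_biprod_total {E : Type*} [Category E] [Preadditive E]
    [HasBinaryBiproducts D] (G : D ⥤ E) [G.Additive] (A B : D) :
    G.map (biprod.fst : A ⊞ B ⟶ A) ≫ G.map biprod.inl + G.map biprod.snd ≫ G.map biprod.inr =
      𝟙 _ := by
  rw [← G.map_comp, ← G.map_comp, ← G.map_add, biprod.total, G.map_id]

theorem CategoryTheory.Functor.map_biprod_hom_ext {E : Type*} [Category E] [Preadditive E]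
    [HasBinaryBiproducts D] (G : D ⥤ E) [G.Additive] {A B : D} {T : E}
    {f g : G.obj (A ⊞ B) ⟶ T} (hl : G.map biprod.inl ≫ f = G.map biprod.inl ≫ g)
    (hr : G.map biprod.inr ≫ f = G.map biprod.inr ≫ g) : f = g := by
  rw [← Category.id_comp f, ← Category.id_comp g, ← G.map_biprod_total]
  simp only [Preadditive.add_comp, Category.assoc, hl, hr]

theorem exists_str_comp_eq [Y.Additive] (hYinj : ∀ I : D, Injective I → Injective (Y.obj I)) {J : D}
    (hJ : Injective J) {K : ℕ} (hK : IsZero ((fpow Y K).obj J)) (A G : XMod Y) [Mono A.str]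
    (u : J ⟶ G.carrier) (c : Y.obj A.carrier ⟶ J) :
    ∃ g : A.carrier ⟶ G.carrier, A.str ≫ g = c ≫ u + Y.map g ≫ G.str := by
  -- After `k` steps the defect of `g` is `γ ≫ ι` with `γ` landing in `Y^k J`; it dies at `k = K`.
  suffices ∀ k, ∃ (g : A.carrier ⟶ G.carrier) (γ : A.carrier ⟶ (fpow Y k).obj J)
      (ι : (fpow Y k).obj J ⟶ G.carrier), A.str ≫ (g + γ ≫ ι) = c ≫ u + Y.map g ≫ G.str by
    obtain ⟨g, γ, ι, h⟩ := this K
    exact ⟨g, by rwa [hK.eq_of_tgt γ 0, zero_comp, add_zero] at h⟩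
  intro k
  induction k with
  | zero =>
    have h : A.str ≫ (0 + Injective.factorThru c A.str ≫ u) = c ≫ u + Y.map 0 ≫ G.str := by simp
    exact ⟨_, _, _, h⟩
  | succ k ih =>
    obtain ⟨g, γ, ι, h⟩ := ih
    have : Injective (Y.obj ((fpow Y k).obj J)) := injective_fpow hYinj hJ (k + 1)
    have h' : A.str ≫ ((g + γ ≫ ι) + Injective.factorThru (Y.map γ) A.str ≫ Y.map ι ≫ G.str) =
        c ≫ u + Y.map (g + γ ≫ ι) ≫ G.str := by
      rw [Preadditive.comp_add, Injective.comp_factorThru_assoc, h, Y.map_add,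
        Preadditive.add_comp, Y.map_comp, Category.assoc, add_assoc]
    exact ⟨_, _, _, h'⟩

variable [HasBinaryBiproducts D]

namespace IsFreeXModOn

variable {F : XMod Y} {N : D} (hF : IsFreeXModOn Y F N)

noncomputable def carrierIso : N ⊞ Y.obj F.carrier ≅ F.carrier :=
  let W : XMod Y := ⟨N ⊞ Y.obj F.carrier, Y.map (biprod.desc hF.unit F.str) ≫ biprod.inr⟩
  let ζ : W ⟶ F := ⟨biprod.desc hF.unit F.str, by simp [W]⟩
  have inv_hom : (hF.lift W biprod.inl).hom ≫ ζ.hom = 𝟙 F.carrier :=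
    congrArg XModHom.hom (hF.hom_ext (k := hF.lift W biprod.inl ≫ ζ) (l := 𝟙 F)
      (by simp [reassoc_of% hF.fac W biprod.inl, ζ]))
  { hom := ζ.hom
    inv := (hF.lift W biprod.inl).hom
    hom_inv_id := by
      apply biprod.hom_ext'
      · simp [ζ, hF.fac]
      · rw [biprod.inr_desc_assoc, (hF.lift W biprod.inl).comm, ← Functor.map_comp_assoc,
          inv_hom, Y.map_id, Category.id_comp, Category.comp_id]
    inv_hom_id := inv_hom }

@[simp]
theorem carrierIso_hom : hF.carrierIso.hom = biprod.desc hF.unit F.str := rfl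

noncomputable def proj : F.carrier ⟶ N := hF.carrierIso.inv ≫ biprod.fst

noncomputable def projX : F.carrier ⟶ Y.obj F.carrier := hF.carrierIso.inv ≫ biprod.snd

theorem unit_carrierIso_inv : hF.unit ≫ hF.carrierIso.inv = biprod.inl :=
  (Iso.comp_inv_eq _).2 (biprod.inl_desc _ _).symm

theorem str_carrierIso_inv : F.str ≫ hF.carrierIso.inv = biprod.inr :=
  (Iso.comp_inv_eq _).2 (biprod.inr_desc _ _).symm

@[simp]
theorem unit_proj : hF.unit ≫ hF.proj = 𝟙 N := by
  simp [proj, reassoc_of% hF.unit_carrierIso_inv]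

@[simp]
theorem str_proj : F.str ≫ hF.proj = 0 := by
  simp [proj, reassoc_of% hF.str_carrierIso_inv]

@[simp]
theorem str_projX : F.str ≫ hF.projX = 𝟙 _ := by
  simp [projX, reassoc_of% hF.str_carrierIso_inv]

theorem proj_unit_add_projX_str : hF.proj ≫ hF.unit + hF.projX ≫ F.str = 𝟙 F.carrier := by
  simp only [proj, projX, Category.assoc, ← Preadditive.comp_add]
  rw [← hF.carrierIso.inv_hom_id]
  congr 1
  ext <;> simp

theorem mono_str (hF : IsFreeXModOn Y F N) : Mono F.str := mono_of_mono_fac hF.str_projX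

noncomputable def head (m : F ⟶ F) : N ⟶ N := hF.unit ≫ m.hom ≫ hF.proj

theorem hom_proj (m : F ⟶ F) : m.hom ≫ hF.proj = hF.proj ≫ hF.head m := by
  conv_lhs => rw [← Category.id_comp m.hom, ← hF.proj_unit_add_projX_str]
  simp only [Preadditive.add_comp, Category.assoc]
  rw [reassoc_of% m.comm, str_proj, comp_zero, comp_zero, add_zero, head]

theorem head_comp (m m' : F ⟶ F) : hF.head (m ≫ m') = hF.head m ≫ hF.head m' := by
  conv_lhs => rw [head, XMod.comp_hom, Category.assoc, hF.hom_proj m']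
  simp only [head, Category.assoc]

@[simp]
theorem head_id : hF.head (𝟙 F) = 𝟙 N := by
  rw [head, XMod.id_hom, Category.id_comp, unit_proj]

theorem head_lift (β : N ⟶ N) : hF.head (hF.lift F (β ≫ hF.unit)) = β := by
  rw [head, reassoc_of% hF.fac F (β ≫ hF.unit), unit_proj, Category.comp_id]

end IsFreeXModOn

namespace XMod

noncomputable abbrev twistedBiprod (F M : XMod Y) (c : Y.obj M.carrier ⟶ F.carrier) : XMod Y where
  carrier := F.carrier ⊞ M.carrier
  str := biprod.lift (Y.map biprod.fst ≫ F.str + Y.map biprod.snd ≫ c) (Y.map biprod.snd ≫ M.str)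

namespace twistedBiprod

variable {F M : XMod Y} {c : Y.obj M.carrier ⟶ F.carrier}

noncomputable def snd : twistedBiprod F M c ⟶ M := ⟨biprod.snd, biprod.lift_snd _ _⟩

@[simp] theorem snd_hom : (snd : twistedBiprod F M c ⟶ M).hom = biprod.snd := rfl

noncomputable def lift {N : XMod Y} (g : N.carrier ⟶ F.carrier) (f : N ⟶ M)
    (h : N.str ≫ g = Y.map g ≫ F.str + Y.map f.hom ≫ c) : N ⟶ twistedBiprod F M c :=
  ⟨biprod.lift g f.hom, by apply biprod.hom_ext <;> simp [← Functor.map_comp_assoc, h, f.comm]⟩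

@[simp]
theorem lift_snd {N : XMod Y} (g : N.carrier ⟶ F.carrier) (f : N ⟶ M)
    (h : N.str ≫ g = Y.map g ≫ F.str + Y.map f.hom ≫ c) : lift g f h ≫ snd = f := by
  ext
  exact biprod.lift_snd _ _

theorem inl_hom_snd {ψ : twistedBiprod F M c ⟶ twistedBiprod F M c} (hψ : ψ ≫ snd = snd) :
    biprod.inl ≫ ψ.hom ≫ biprod.snd = 0 := by
  rw [← snd_hom, ← comp_hom, hψ, snd_hom, biprod.inl_snd]

theorem inr_hom_snd {ψ : twistedBiprod F M c ⟶ twistedBiprod F M c} (hψ : ψ ≫ snd = snd) :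
    biprod.inr ≫ ψ.hom ≫ biprod.snd = 𝟙 _ := by
  rw [← snd_hom, ← comp_hom, hψ, snd_hom, biprod.inr_snd]

variable [Y.Additive]

theorem map_inl_str : Y.map biprod.inl ≫ (twistedBiprod F M c).str = F.str ≫ biprod.inl := by
  apply biprod.hom_ext <;> simp [← Functor.map_comp_assoc]

theorem map_inr_str :
    Y.map biprod.inr ≫ (twistedBiprod F M c).str = c ≫ biprod.inl + M.str ≫ biprod.inr := by
  apply biprod.hom_ext <;> simp [← Functor.map_comp_assoc]

noncomputable def inl : F ⟶ twistedBiprod F M c := ⟨biprod.inl, map_inl_str.symm⟩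

@[simp] theorem inl_hom : (inl : F ⟶ twistedBiprod F M c).hom = biprod.inl := rfl

noncomputable def desc {T : XMod Y} (a : F ⟶ T) (b : M.carrier ⟶ T.carrier)
    (h : c ≫ a.hom + M.str ≫ b = Y.map b ≫ T.str) : twistedBiprod F M c ⟶ T :=
  ⟨biprod.desc a.hom b, by
    apply Y.map_biprod_hom_ext
    · rw [reassoc_of% map_inl_str, biprod.inl_desc, a.comm, ← Functor.map_comp_assoc,
        biprod.inl_desc]
    · rw [reassoc_of% map_inr_str, ← Functor.map_comp_assoc, biprod.inr_desc]
      simpa using h⟩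

@[simp] theorem desc_hom {T : XMod Y} (a : F ⟶ T) (b : M.carrier ⟶ T.carrier)
    (h : c ≫ a.hom + M.str ≫ b = Y.map b ≫ T.str) : (desc a b h).hom = biprod.desc a.hom b := rfl

theorem isPushout {FM FYM : XMod Y} (hFM : IsFreeXModOn Y FM M.carrier)
    (hFYM : IsFreeXModOn Y FYM (Y.obj M.carrier)) (d : FYM ⟶ FM)
    (hd : hFYM.unit ≫ d.hom = Y.map hFM.unit ≫ FM.str - M.str ≫ hFM.unit) (fc : FYM ⟶ F)
    (hfc : hFYM.unit ≫ fc.hom = c) :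
    IsPushout fc d inl (hFM.lift (twistedBiprod F M c) biprod.inr) := by
  set r := hFM.lift (twistedBiprod F M c) biprod.inr
  have hr : hFM.unit ≫ r.hom = biprod.inr := hFM.fac _ _
  have hd' : Y.map hFM.unit ≫ FM.str = hFYM.unit ≫ d.hom + M.str ≫ hFM.unit := by
    rw [hd, sub_add_cancel]
  have w : fc ≫ inl = d ≫ r := hFYM.hom_ext <| by
    rw [comp_hom, comp_hom, reassoc_of% hfc, reassoc_of% hd, Preadditive.sub_comp, Category.assoc,
      r.comm, ← Functor.map_comp_assoc, hr, map_inr_str, Category.assoc, hr]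
    simp
  have hdesc : ∀ {T : XMod Y} (a : F ⟶ T) (b : FM ⟶ T), fc ≫ a = d ≫ b →
      c ≫ a.hom + M.str ≫ hFM.unit ≫ b.hom = Y.map (hFM.unit ≫ b.hom) ≫ T.str := by
    intro T a b hab
    rw [Functor.map_comp, Category.assoc, ← b.comm, reassoc_of% hd', Preadditive.add_comp,
      Category.assoc, ← comp_hom, ← hab, comp_hom, reassoc_of% hfc, Category.assoc]
  refine IsPushout.of_isColimit (PushoutCocone.IsColimit.mk w
    (fun s => desc s.inl (hFM.unit ≫ s.inr.hom) (hdesc _ _ s.condition))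
    (fun s => ?_) (fun s => ?_) (fun s m hl hr' => ?_))
  · ext
    simp
  · exact hFM.hom_ext (by simp [reassoc_of% hr])
  · ext
    · simpa using congrArg XModHom.hom hl
    · rw [desc_hom, biprod.inr_desc, ← hr', comp_hom, reassoc_of% hr]

noncomputable def corner (ψ : twistedBiprod F M c ⟶ twistedBiprod F M c) (hψ : ψ ≫ snd = snd) :
    F ⟶ F :=
  ⟨biprod.inl ≫ ψ.hom ≫ biprod.fst, by
    rw [← reassoc_of% map_inl_str, reassoc_of% ψ.comm, ← Functor.map_comp_assoc, biprod.lift_fst,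
      Preadditive.comp_add, ← Functor.map_comp_assoc, ← Functor.map_comp_assoc, Category.assoc,
      Category.assoc, inl_hom_snd hψ, Functor.map_zero, zero_comp, add_zero]⟩

@[simp]
theorem corner_hom (ψ : twistedBiprod F M c ⟶ twistedBiprod F M c) (hψ : ψ ≫ snd = snd) :
    (corner ψ hψ).hom = biprod.inl ≫ ψ.hom ≫ biprod.fst := rfl

theorem isIso_of_isIso_corner (ψ : twistedBiprod F M c ⟶ twistedBiprod F M c)
    (hψ : ψ ≫ snd = snd) [IsIso (corner ψ hψ)] : IsIso ψ := by
  set a := (corner ψ hψ).hom with ha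
  have : IsIso a := inferInstanceAs (IsIso ((forget Y).map (corner ψ hψ)))
  have hψ_eq : ψ.hom = (Biprod.unipotentLower (biprod.inr ≫ ψ.hom ≫ biprod.fst ≫ inv a)).hom ≫
      (biprod.mapIso (asIso a) (Iso.refl _)).hom := by
    apply biprod.hom_ext' <;> apply biprod.hom_ext <;>
      simp [ha, Biprod.ofComponents, inl_hom_snd hψ, inr_hom_snd hψ]
  have : IsIso ((forget Y).map ψ) := by
    rw [forget_map, hψ_eq]
    exact (Biprod.unipotentLower _ ≪≫ biprod.mapIso (asIso a) (Iso.refl _)).isIso_hom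
  exact isIso_of_reflects_iso ψ (forget Y)

end twistedBiprod

end XMod

end

theorem XMod.sub_hom {M N : XMod X} (f g : M ⟶ N) : (f - g).hom = f.hom - g.hom := by
  rw [sub_eq_add_neg, sub_eq_add_neg, XMod.add_hom]
  rfl

namespace IsFreeXModOn

variable {F : XMod X} {N : C} (hF : IsFreeXModOn X F N)

theorem head_sub (m m' : F ⟶ F) : hF.head (m - m') = hF.head m - hF.head m' := by
  simp only [head, XMod.sub_hom, Preadditive.sub_comp, Preadditive.comp_sub]

theorem isNilpotent_of_head_eq_zero {K : ℕ} (hK : IsZero ((fpow X K).obj F.carrier))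
    (n : End F) (hn : hF.head n = 0) : IsNilpotent n := by
  have hfac : n.hom = (n.hom ≫ hF.projX) ≫ F.str := by
    conv_lhs => rw [← Category.comp_id n.hom, ← hF.proj_unit_add_projX_str]
    rw [Preadditive.comp_add, ← Category.assoc, hF.hom_proj, hn, comp_zero, zero_comp, zero_add,
      Category.assoc]
  have hpow : ∀ k, ∃ (y : F.carrier ⟶ (fpow X k).obj F.carrier)
      (z : (fpow X k).obj F.carrier ⟶ F.carrier), (n ^ k).hom = y ≫ z := by
    intro k
    induction k with
    | zero => exact ⟨𝟙 _, 𝟙 _, (Category.comp_id _).symm⟩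
    | succ k ih =>
      obtain ⟨y, z, hyz⟩ := ih
      have h : (n ^ (k + 1)).hom = ((n.hom ≫ hF.projX) ≫ X.map y) ≫ X.map z ≫ F.str := by
        rw [pow_succ, End.mul_def, XMod.comp_hom]
        conv_lhs => rw [hfac]
        simp only [Category.assoc]
        rw [(n ^ k).comm, hyz, X.map_comp]
        simp only [Category.assoc]
      exact ⟨_, _, h⟩
  obtain ⟨y, z, hyz⟩ := hpow K
  exact ⟨K, XMod.hom_ext (by rw [hyz, hK.eq_of_tgt y 0, zero_comp]; rfl)⟩

theorem isIso_of_head_eq_id {K : ℕ} (hK : IsZero ((fpow X K).obj F.carrier))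
    (n : End F) (hn : hF.head n = 𝟙 N) : IsIso n := by
  have hnil : IsNilpotent (1 - n : End F) := hF.isNilpotent_of_head_eq_zero hK _
    (by rw [head_sub, End.one_def, head_id, hn, sub_self])
  exact (isUnit_iff_isIso n).1 (by simpa using hnil.isUnit_one_sub)

theorem isIso_of_isIso_head {K : ℕ} (hK : IsZero ((fpow X K).obj F.carrier))
    (m : F ⟶ F) [IsIso (hF.head m)] : IsIso m := by
  set m' := hF.lift F (inv (hF.head m) ≫ hF.unit)
  have : IsIso (m' ≫ m) :=
    hF.isIso_of_head_eq_id hK _ (by rw [head_comp, head_lift, IsIso.inv_hom_id])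
  have : IsIso (m ≫ m') :=
    hF.isIso_of_head_eq_id hK _ (by rw [head_comp, head_lift, IsIso.hom_inv_id])
  have : Mono m := mono_of_mono m m'
  have : IsSplitEpi m := ⟨⟨inv (m' ≫ m) ≫ m', by simp⟩⟩
  exact isIso_of_mono_of_isSplitEpi m

end IsFreeXModOn

namespace XMod.twistedBiprod

variable {F M : XMod X} {J : C} (hF : IsFreeXModOn X F J) (e : X.obj M.carrier ⟶ J)

theorem mono_str [Mono (kernel.ι M.str ≫ e)] : Mono (twistedBiprod F M (e ≫ hF.unit)).str := by
  refine Preadditive.mono_of_cancel_zero _ fun g hg => ?_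
  have h1 : (g ≫ X.map biprod.fst) ≫ F.str + (g ≫ X.map biprod.snd) ≫ e ≫ hF.unit = 0 := by
    simpa using hg =≫ biprod.fst
  have h2 : (g ≫ X.map biprod.snd) ≫ M.str = 0 := by simpa using hg =≫ biprod.snd
  have h3 : g ≫ X.map biprod.snd ≫ e = 0 := by simpa using h1 =≫ hF.proj
  have hk : kernel.lift M.str _ h2 = 0 :=
    zero_of_comp_mono (kernel.ι M.str ≫ e) (by rw [kernel.lift_ι_assoc, Category.assoc, h3])
  have hsnd : g ≫ X.map biprod.snd = 0 := by rw [← kernel.lift_ι _ _ h2, hk, zero_comp]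
  have : Mono F.str := hF.mono_str
  have hfst : g ≫ X.map biprod.fst = 0 :=
    zero_of_comp_mono F.str (by simpa [hsnd] using h1)
  rw [← Category.comp_id g, ← X.map_biprod_total, Preadditive.comp_add, ← Category.assoc,
    ← Category.assoc, hfst, hsnd, zero_comp, zero_comp, add_zero]

theorem kernel_ι_comp_head_corner
    (ψ : twistedBiprod F M (e ≫ hF.unit) ⟶ twistedBiprod F M (e ≫ hF.unit)) (hψ : ψ ≫ snd = snd) :
    (kernel.ι M.str ≫ e) ≫ hF.head (corner ψ hψ) = kernel.ι M.str ≫ e := by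
  have h := X.map biprod.inr ≫= ψ.comm =≫ (biprod.fst ≫ hF.proj)
  simp only [Category.assoc] at h
  rw [reassoc_of% map_inr_str, ← Functor.map_comp_assoc, biprod.lift_fst_assoc] at h
  simp only [Category.assoc, Preadditive.add_comp, IsFreeXModOn.str_proj,
    IsFreeXModOn.unit_proj, comp_zero, zero_add, Category.comp_id] at h
  rw [← Functor.map_comp_assoc, Category.assoc, inr_hom_snd hψ, X.map_id, Category.id_comp] at h
  have h' := kernel.ι M.str ≫= h
  rw [Preadditive.comp_add, kernel.condition_assoc, zero_comp, add_zero] at h'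
  simpa [IsFreeXModOn.head] using h'

theorem isRightMonoApproximation_snd (hXinj : ∀ I : C, Injective I → Injective (X.obj I))
    (hJ : Injective J) {K : ℕ} (hK : IsZero ((fpow X K).obj J)) [Mono (kernel.ι M.str ≫ e)] :
    IsRightMonoApproximation (snd : twistedBiprod F M (e ≫ hF.unit) ⟶ M) := by
  refine ⟨mono_str hF e, fun N _ f => ?_⟩
  obtain ⟨g, hg⟩ := exists_str_comp_eq hXinj hJ hK N F hF.unit (X.map f.hom ≫ e)
  exact ⟨lift g f (by rw [hg, add_comm, Category.assoc]), lift_snd _ _ _⟩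

theorem isRightMinimal_snd {K : ℕ} (hK : IsZero ((fpow X K).obj F.carrier))
    (hemin : ∀ φ : J ⟶ J, (kernel.ι M.str ≫ e) ≫ φ = kernel.ι M.str ≫ e → IsIso φ) :
    IsRightMinimal (snd : twistedBiprod F M (e ≫ hF.unit) ⟶ M) := by
  intro ψ hψ
  have : IsIso (hF.head (corner ψ hψ)) := hemin _ (kernel_ι_comp_head_corner hF e ψ hψ)
  have : IsIso (corner ψ hψ) := hF.isIso_of_isIso_head hK _
  exact isIso_of_isIso_corner ψ hψ

end XMod.twistedBiprod

theorem mimo_is_minimal_right_monoX_approximation_general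
    (hX : LocallyNilpotent X)
    (hXinj : ∀ I : C, Injective I → Injective (X.obj I))
    (M : XMod X) (J : C) (hJ : Injective J) (e : X.obj M.carrier ⟶ J)
    (he : Mono (kernel.ι M.str ≫ e))
    (hemin : ∀ φ : J ⟶ J, (kernel.ι M.str ≫ e) ≫ φ = kernel.ι M.str ≫ e → IsIso φ)
    (FM FXM FJ : XMod X)
    (hFM : IsFreeXModOn X FM M.carrier) (hFXM : IsFreeXModOn X FXM (X.obj M.carrier))
    (hFJ : IsFreeXModOn X FJ J)
    (d : FXM ⟶ FM) (hd : hFXM.unit ≫ d.hom = X.map hFM.unit ≫ FM.str - M.str ≫ hFM.unit)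
    (fe : FXM ⟶ FJ) (hfe : hFXM.unit ≫ fe.hom = e ≫ hFJ.unit)
    (ε : FM ⟶ M) (hε : hFM.unit ≫ ε.hom = 𝟙 M.carrier)
    (Mo : XMod X) (s : FJ ⟶ Mo) (r : FM ⟶ Mo) (hpo : IsPushout fe d s r)
    (p : Mo ⟶ M) (hp1 : r ≫ p = ε) (hp2 : s ≫ p = 0) :
    (Mono Mo.str ∧
      ∀ (N : XMod X), Mono N.str → ∀ f : N ⟶ M, ∃ f' : N ⟶ Mo, f' ≫ p = f) ∧
      ∀ φ : Mo ⟶ Mo, φ ≫ p = p → IsIso φ := by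
  let i := hpo.isoIsPushout _ _ (XMod.twistedBiprod.isPushout hFM hFXM d hd fe hfe)
  have hi : i.hom ≫ XMod.twistedBiprod.snd = p := by
    refine hpo.hom_ext ?_ ?_
    · rw [hpo.inl_isoIsPushout_hom_assoc, hp2]
      ext
      simp
    · rw [hpo.inr_isoIsPushout_hom_assoc, hp1]
      exact hFM.hom_ext (by simp [reassoc_of% hFM.fac, hε])
  obtain ⟨K, hK⟩ := hX J
  obtain ⟨K', hK'⟩ := hX FJ.carrier
  exact ⟨(XMod.twistedBiprod.isRightMonoApproximation_snd hFJ e hXinj hJ hK).of_iso i hi,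
    (XMod.twistedBiprod.isRightMinimal_snd hFJ e hK' hemin).of_iso i hi⟩

/-- Let `C` be abelian with enough injectives and `X` exact, locally
nilpotent and preserving injectives. For `M` in the Eilenberg–Moore category of the free
monad, if in the construction of `Mo M` the map `e : X(M) ⟶ J` restricts to an injective
envelope of `ker h_M` (a left minimal monomorphism into the injective `J`), then the
resulting map `p : Mimo M ⟶ M` is a minimal right `Mono(X)`-approximation: a right
approximation such that every endomorphism `φ` with `φ ≫ p = p` is an isomorphism. -/
theorem mimo_is_minimal_right_monoX_approximation
    [EnoughInjectives C]
    [PreservesFiniteLimits X] [PreservesFiniteColimits X]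
    (hX : LocallyNilpotent X)
    (hXinj : ∀ I : C, Injective I → Injective (X.obj I))
    (M : XMod X) (J : C) (hJ : Injective J) (e : X.obj M.carrier ⟶ J)
    (he : Mono (kernel.ι M.str ≫ e))
    (hemin : ∀ φ : J ⟶ J, (kernel.ι M.str ≫ e) ≫ φ = kernel.ι M.str ≫ e → IsIso φ)
    (FM FXM FJ : XMod X)
    (hFM : IsFreeXModOn X FM M.carrier) (hFXM : IsFreeXModOn X FXM (X.obj M.carrier))
    (hFJ : IsFreeXModOn X FJ J)
    (d : FXM ⟶ FM) (hd : hFXM.unit ≫ d.hom = X.map hFM.unit ≫ FM.str - M.str ≫ hFM.unit)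
    (fe : FXM ⟶ FJ) (hfe : hFXM.unit ≫ fe.hom = e ≫ hFJ.unit)
    (ε : FM ⟶ M) (hε : hFM.unit ≫ ε.hom = 𝟙 M.carrier)
    (Mo : XMod X) (s : FJ ⟶ Mo) (r : FM ⟶ Mo) (hpo : IsPushout fe d s r)
    (p : Mo ⟶ M) (hp1 : r ≫ p = ε) (hp2 : s ≫ p = 0) :
    (Mono Mo.str ∧
      ∀ (N : XMod X), Mono N.str → ∀ f : N ⟶ M, ∃ f' : N ⟶ Mo, f' ≫ p = f) ∧
      ∀ φ : Mo ⟶ Mo, φ ≫ p = p → IsIso φ :=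
  mimo_is_minimal_right_monoX_approximation_general hX hXinj M J hJ e he hemin FM FXM FJ hFM hFXM
    hFJ d hd fe hfe ε hε Mo s r hpo p hp1 hp2
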